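/- Let A ∈ ℝ^{n×d} have thin SVD A = UΣVᵀ, let 1 ≤ k < rank(A), let U_k consist of the top k left singular vectors, and let A_{k,⊥} = A − A_k. Define sampling probabilities p_i = (1/2)‖(U_k)_{i*}‖₂²/k + (1/2)‖(A_{k,⊥})_{i*}‖₂²/‖A_{k,⊥}‖_F², and let W ∈ ℝ^{s×n} be the random sampling-and-rescaling matrix of Algorithm 1 built from these probabilities. For ε > 0 and δ ∈ (0,1), if s ≥ 8k/(δ ε²), then P(|‖W A_{k,⊥}‖_F² − ‖A_{k,⊥}‖_F²| ≥ (ε/√k) ‖A_{k,⊥}‖_F²) ≤ δ/4 and P(‖A_{k,⊥}ᵀ Wᵀ W A_{k,⊥} − A_{k,⊥}ᵀ A_{k,⊥}‖_F ≥ (ε/√k) ‖A_{k,⊥}‖_F²) ≤ δ/4. -/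

import Mathlib

open Matrix BigOperators

noncomputable def frobNorm {m n : Type*} [Fintype m] [Fintype n]
    (A : Matrix m n ℝ) : ℝ := Real.sqrt (∑ i, ∑ j, (A i j) ^ 2)

noncomputable def specNorm {m n : ℕ} (A : Matrix (Fin m) (Fin n) ℝ) : ℝ :=
  ‖LinearMap.toContinuousLinearMap (Matrix.toEuclideanLin A)‖

noncomputable def truncDiag {r : ℕ} (σ : Fin r → ℝ) (m : ℕ) :
    Matrix (Fin r) (Fin r) ℝ :=
  Matrix.diagonal fun i => if (i : ℕ) < m then σ i else 0

noncomputable def samplingMatrix {n : ℕ} (p : Fin n → ℝ) (s : ℕ) (ω : Fin s → Fin n) :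
    Matrix (Fin s) (Fin n) ℝ :=
  fun i j => if j = ω i then 1 / Real.sqrt (s * p j) else 0

noncomputable def expec {n s : ℕ} (p : Fin n → ℝ) (f : (Fin s → Fin n) → ℝ) : ℝ :=
  ∑ ω : Fin s → Fin n, (∏ i, p (ω i)) * f ω

open Classical in
noncomputable def probOf {n s : ℕ} (p : Fin n → ℝ) (E : (Fin s → Fin n) → Prop) : ℝ :=
  ∑ ω : Fin s → Fin n, if E ω then (∏ i, p (ω i)) else 0

def firstCols {n r : ℕ} (U : Matrix (Fin n) (Fin r) ℝ) (k : ℕ) (h : k ≤ r) :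
    Matrix (Fin n) (Fin k) ℝ :=
  fun i j => U i (Fin.castLE h j)

noncomputable def ridgeDiag {r : ℕ} (σ : Fin r → ℝ) (lam : ℝ) :
    Matrix (Fin r) (Fin r) ℝ :=
  Matrix.diagonal fun i => σ i / Real.sqrt (σ i ^ 2 + lam)

/-! Write `B = A - A_k`. Under `s` independent draws from `p`, `‖W B‖_F²` is the sample mean of
`‖B_j‖² / p_j`, and the `(a, b)` entry of `Bᵀ Wᵀ W B` is the sample mean of `B_ja B_jb / p_j`; the
means are `‖B‖_F²` and `(Bᵀ B)_ab`. The second term of the mixture gives `‖B_j‖² ≤ 2 ‖B‖_F² p_j`, so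
both second moments are at most `2 ‖B‖_F⁴`, and Chebyshev's inequality bounds each failure
probability by `2 k / (s ε²) ≤ δ / 4`. -/

open Finset

section Expectation

variable {n s : ℕ} (p : Fin n → ℝ)

lemma expec_prod (G : Fin s → Fin n → ℝ) :
    expec p (fun ω => ∏ i, G i (ω i)) = ∏ i, ∑ j, p j * G i j := by
  rw [Fintype.prod_sum]
  exact sum_congr rfl fun ω _ => prod_mul_distrib.symm

lemma expec_prod_finset (hp1 : ∑ j, p j = 1) (t : Finset (Fin s)) (G : Fin s → Fin n → ℝ) :
    expec p (fun ω => ∏ i ∈ t, G i (ω i)) = ∏ i ∈ t, ∑ j, p j * G i j := by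
  classical
  have h := expec_prod p fun i j => if i ∈ t then G i j else 1
  have hmarg : ∀ i, (∑ j, p j * if i ∈ t then G i j else 1) =
      if i ∈ t then ∑ j, p j * G i j else 1 := by
    intro i; split_ifs <;> simp [hp1]
  simpa only [hmarg, apply_ite (fun g : Fin n → ℝ => g _), prod_ite_mem, univ_inter] using h

lemma expec_apply (hp1 : ∑ j, p j = 1) (i : Fin s) (g : Fin n → ℝ) :
    expec p (fun ω => g (ω i)) = ∑ j, p j * g j := by
  simpa using expec_prod_finset p hp1 {i} fun _ => g

lemma expec_apply_mul_apply (hp1 : ∑ j, p j = 1) {i i' : Fin s} (hii' : i ≠ i')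
    (g : Fin n → ℝ) :
    expec p (fun ω => g (ω i) * g (ω i')) = (∑ j, p j * g j) ^ 2 := by
  simpa [prod_pair hii', sq] using expec_prod_finset p hp1 {i, i'} fun _ => g

lemma expec_const_mul (c : ℝ) (f : (Fin s → Fin n) → ℝ) :
    expec p (fun ω => c * f ω) = c * expec p f := by
  rw [expec, expec, mul_sum]
  exact sum_congr rfl fun ω _ => mul_left_comm _ _ _

lemma expec_sum {ι : Type*} (t : Finset ι) (F : ι → (Fin s → Fin n) → ℝ) :
    expec p (fun ω => ∑ a ∈ t, F a ω) = ∑ a ∈ t, expec p (F a) := by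
  simp_rw [expec, mul_sum]
  exact sum_comm

lemma probOf_le_expec_div (hp0 : ∀ j, 0 ≤ p j) {E : (Fin s → Fin n) → Prop}
    {g : (Fin s → Fin n) → ℝ} {t : ℝ} (hg : ∀ ω, 0 ≤ g ω) (ht : 0 < t)
    (hE : ∀ ω, E ω → t ≤ g ω) :
    probOf p E ≤ expec p g / t := by
  rw [le_div_iff₀ ht, probOf, expec, sum_mul]
  refine sum_le_sum fun ω _ => ?_
  have hω : 0 ≤ ∏ i, p (ω i) := prod_nonneg fun i _ => hp0 _
  split_ifs with h
  · exact mul_le_mul_of_nonneg_left (hE ω h) hω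
  · rw [zero_mul]
    exact mul_nonneg hω (hg ω)

lemma expec_sq_sum_of_mean_eq_zero (hp1 : ∑ j, p j = 1) (g : Fin n → ℝ)
    (hg : ∑ j, p j * g j = 0) :
    expec p (fun ω : Fin s → Fin n => (∑ i, g (ω i)) ^ 2) = s * ∑ j, p j * g j ^ 2 := by
  have hcov : ∀ i i' : Fin s, expec p (fun ω => g (ω i) * g (ω i')) =
      if i = i' then ∑ j, p j * g j ^ 2 else 0 := by
    intro i i'
    split_ifs with h
    · subst h
      exact (expec_apply p hp1 i fun j => g j * g j).trans (by simp only [sq])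
    · rw [expec_apply_mul_apply p hp1 h, hg, zero_pow two_ne_zero]
  simp_rw [sq (∑ i, _), sum_mul_sum, expec_sum, hcov]
  simp

end Expectation

noncomputable def sampleMean {n s : ℕ} (f : Fin n → ℝ) (ω : Fin s → Fin n) : ℝ :=
  (∑ i, f (ω i)) / s

section SampleMean

variable {n s : ℕ} (p : Fin n → ℝ)

lemma expec_sq_sampleMean_sub_le (hp1 : ∑ j, p j = 1) (hs : 0 < s) (f : Fin n → ℝ) :
    expec p (fun ω : Fin s → Fin n => (sampleMean f ω - ∑ j, p j * f j) ^ 2)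
      ≤ (∑ j, p j * f j ^ 2) / s := by
  set μ := ∑ j, p j * f j
  have hsR : (s : ℝ) ≠ 0 := by positivity
  have hcentered : ∑ j, p j * (f j - μ) = 0 := by
    simp only [mul_sub, sum_sub_distrib, ← sum_mul, hp1, one_mul]
    exact sub_self μ
  have hvar : ∑ j, p j * (f j - μ) ^ 2 = ∑ j, p j * f j ^ 2 - μ ^ 2 := by
    have : ∀ j, p j * (f j - μ) ^ 2 = p j * f j ^ 2 - 2 * μ * (p j * f j) + μ ^ 2 * p j :=
      fun j => by ring
    simp only [this, sum_add_distrib, sum_sub_distrib, ← mul_sum, hp1]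
    ring
  have hdev : ∀ ω : Fin s → Fin n,
      (sampleMean f ω - μ) ^ 2 = 1 / (s : ℝ) ^ 2 * (∑ i, (f (ω i) - μ)) ^ 2 := by
    intro ω
    rw [sampleMean, sum_sub_distrib, sum_const, card_univ, Fintype.card_fin, nsmul_eq_mul]
    field_simp
  calc expec p (fun ω : Fin s → Fin n => (sampleMean f ω - μ) ^ 2)
      = 1 / (s : ℝ) ^ 2 * expec p (fun ω : Fin s → Fin n => (∑ i, (f (ω i) - μ)) ^ 2) := by
        simp_rw [hdev, expec_const_mul]
    _ = (∑ j, p j * f j ^ 2 - μ ^ 2) / s := by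
        rw [expec_sq_sum_of_mean_eq_zero p hp1 _ hcentered, hvar]
        field_simp
    _ ≤ (∑ j, p j * f j ^ 2) / s := by
        gcongr
        exact sub_le_self _ (sq_nonneg μ)

lemma probOf_le_of_sampleMean_deviation {ι : Type*} [Fintype ι] (hp0 : ∀ j, 0 ≤ p j)
    (hp1 : ∑ j, p j = 1) (hs : 0 < s) (f : ι → Fin n → ℝ)
    {E : (Fin s → Fin n) → Prop} {t : ℝ} (ht : 0 < t)
    (hE : ∀ ω, E ω → t ≤ ∑ a, (sampleMean (f a) ω - ∑ j, p j * f a j) ^ 2) :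
    probOf p E ≤ (∑ a, ∑ j, p j * f a j ^ 2) / (s * t) := by
  calc probOf p E
      ≤ expec p (fun ω => ∑ a, (sampleMean (f a) ω - ∑ j, p j * f a j) ^ 2) / t :=
        probOf_le_expec_div p hp0 (fun ω => by positivity) ht hE
    _ ≤ (∑ a, (∑ j, p j * f a j ^ 2) / s) / t := by
        rw [expec_sum]
        gcongr with a
        exact expec_sq_sampleMean_sub_le p hp1 hs (f a)
    _ = (∑ a, ∑ j, p j * f a j ^ 2) / (s * t) := by
        rw [← sum_div, div_div]

end SampleMean

lemma frobNorm_sq {m n : Type*} [Fintype m] [Fintype n] (A : Matrix m n ℝ) :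
    frobNorm A ^ 2 = ∑ i, ∑ j, A i j ^ 2 :=
  Real.sq_sqrt (by positivity)

lemma frobNorm_sq_pos {m n : Type*} [Fintype m] [Fintype n] {A : Matrix m n ℝ} (hA : A ≠ 0) :
    0 < frobNorm A ^ 2 := by
  rw [frobNorm_sq]
  refine lt_of_le_of_ne (by positivity) (Ne.symm fun h => hA ?_)
  ext i j
  have hrow := congr_fun ((Fintype.sum_eq_zero_iff_of_nonneg fun i => by positivity).1 h) i
  simpa using congr_fun ((Fintype.sum_eq_zero_iff_of_nonneg fun j => by positivity).1 hrow) j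

-- Holds at `a = 0` too: both sides are `0` there, since `x / 0 = 0`.
lemma mul_div_self_sq (a b : ℝ) : a * (b / a) ^ 2 = b ^ 2 / a := by
  rcases eq_or_ne a 0 with rfl | ha
  · simp
  · field_simp

section SamplingMatrix

variable {n d s : ℕ} (p : Fin n → ℝ) (B : Matrix (Fin n) (Fin d) ℝ)

lemma samplingMatrix_mul_apply (ω : Fin s → Fin n) (i : Fin s) (a : Fin d) :
    (samplingMatrix p s ω * B) i a = B (ω i) a / √(s * p (ω i)) := by
  simp [Matrix.mul_apply, samplingMatrix, div_eq_inv_mul]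

lemma samplingMatrix_mul_apply_mul_apply (hp0 : ∀ j, 0 ≤ p j) (ω : Fin s → Fin n) (i : Fin s)
    (a b : Fin d) :
    (samplingMatrix p s ω * B) i a * (samplingMatrix p s ω * B) i b
      = B (ω i) a * B (ω i) b / p (ω i) / s := by
  have := hp0 (ω i)
  rw [samplingMatrix_mul_apply, samplingMatrix_mul_apply, div_mul_div_comm,
    Real.mul_self_sqrt (by positivity), div_div, mul_comm (s : ℝ)]

lemma frobNorm_sq_samplingMatrix_mul (hp0 : ∀ j, 0 ≤ p j) (ω : Fin s → Fin n) :
    frobNorm (samplingMatrix p s ω * B) ^ 2 = sampleMean (fun j => (∑ a, B j a ^ 2) / p j) ω := by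
  simp_rw [frobNorm_sq, sq, samplingMatrix_mul_apply_mul_apply p B hp0, sampleMean, sum_div]

lemma gram_samplingMatrix_mul_apply (hp0 : ∀ j, 0 ≤ p j) (ω : Fin s → Fin n) (a b : Fin d) :
    (Bᵀ * (samplingMatrix p s ω)ᵀ * samplingMatrix p s ω * B) a b
      = sampleMean (fun j => B j a * B j b / p j) ω := by
  rw [← Matrix.transpose_mul, Matrix.mul_assoc, Matrix.mul_apply]
  simp_rw [Matrix.transpose_apply, samplingMatrix_mul_apply_mul_apply p B hp0, sampleMean, sum_div]

variable {c : ℝ}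

lemma apply_eq_zero_of_prob_eq_zero (hc : ∀ j, ∑ a, B j a ^ 2 ≤ c * p j) {j : Fin n}
    (hj : p j = 0) (a : Fin d) : B j a = 0 := by
  have hrow : ∑ a, B j a ^ 2 = 0 := le_antisymm (by simpa [hj] using hc j) (by positivity)
  exact pow_eq_zero_iff two_ne_zero |>.1
    ((sum_eq_zero_iff_of_nonneg fun _ _ => sq_nonneg _).1 hrow a (mem_univ a))

lemma sum_sq_div_le (hp0 : ∀ j, 0 ≤ p j) {x : Fin n → ℝ} (hx0 : ∀ j, 0 ≤ x j)
    (hx : ∀ j, x j ≤ c * p j) :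
    ∑ j, x j ^ 2 / p j ≤ c * ∑ j, x j := by
  rw [mul_sum]
  refine sum_le_sum fun j _ => ?_
  rcases (hp0 j).eq_or_lt with hj | hj
  · have : x j = 0 := le_antisymm (by simpa [← hj] using hx j) (hx0 j)
    simp [this]
  · rw [sq, mul_div_assoc, mul_comm c]
    exact mul_le_mul_of_nonneg_left ((div_le_iff₀ hj).2 (hx j)) (hx0 j)

theorem probOf_le_abs_frobNorm_sq_samplingMatrix_mul_sub
    (hp0 : ∀ j, 0 ≤ p j) (hp1 : ∑ j, p j = 1) (hs : 0 < s)
    (hc : ∀ j, ∑ a, B j a ^ 2 ≤ c * p j) {t : ℝ} (ht : 0 < t) :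
    probOf p (fun ω : Fin s → Fin n =>
        t ≤ |frobNorm (samplingMatrix p s ω * B) ^ 2 - frobNorm B ^ 2|)
      ≤ c * frobNorm B ^ 2 / (s * t ^ 2) := by
  set x : Fin n → ℝ := fun j => ∑ a, B j a ^ 2
  have hmean : ∑ j, p j * (x j / p j) = frobNorm B ^ 2 := by
    rw [frobNorm_sq]
    refine sum_congr rfl fun j _ => mul_div_cancel_of_imp' fun hj => ?_
    simp [x, apply_eq_zero_of_prob_eq_zero p B hc hj]
  have hmoment : ∑ _u : Unit, ∑ j, p j * (x j / p j) ^ 2 ≤ c * frobNorm B ^ 2 := by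
    simp_rw [Fintype.sum_unique, mul_div_self_sq, frobNorm_sq]
    exact sum_sq_div_le p hp0 (fun j => by positivity) hc
  refine (probOf_le_of_sampleMean_deviation p hp0 hp1 hs (fun (_ : Unit) j => x j / p j)
    (pow_pos ht 2) fun ω hω => ?_).trans (by gcongr)
  rw [frobNorm_sq_samplingMatrix_mul p B hp0, ← hmean] at hω
  simpa only [Fintype.sum_unique, sq_abs] using pow_le_pow_left₀ ht.le hω 2

theorem probOf_le_frobNorm_gram_samplingMatrix_mul_sub
    (hp0 : ∀ j, 0 ≤ p j) (hp1 : ∑ j, p j = 1) (hs : 0 < s)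
    (hc : ∀ j, ∑ a, B j a ^ 2 ≤ c * p j) {t : ℝ} (ht : 0 < t) :
    probOf p (fun ω : Fin s → Fin n =>
        t ≤ frobNorm (Bᵀ * (samplingMatrix p s ω)ᵀ * samplingMatrix p s ω * B - Bᵀ * B))
      ≤ c * frobNorm B ^ 2 / (s * t ^ 2) := by
  set f : Fin d × Fin d → Fin n → ℝ := fun ab j => B j ab.1 * B j ab.2 / p j
  have hmean : ∀ a b, ∑ j, p j * f (a, b) j = (Bᵀ * B) a b := by
    intro a b
    rw [Matrix.mul_apply]
    refine sum_congr rfl fun j _ => mul_div_cancel_of_imp' fun hj => ?_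
    simp [apply_eq_zero_of_prob_eq_zero p B hc hj]
  have hmoment : ∑ ab, ∑ j, p j * f ab j ^ 2 ≤ c * frobNorm B ^ 2 := by
    calc ∑ ab, ∑ j, p j * f ab j ^ 2 = ∑ j, (∑ a, B j a ^ 2) ^ 2 / p j := by
          rw [sum_comm]
          refine sum_congr rfl fun j _ => ?_
          simp_rw [f, mul_div_self_sq, Fintype.sum_prod_type, mul_pow, sq (∑ a, _), sum_mul_sum,
            sum_div]
      _ ≤ c * frobNorm B ^ 2 := by
          rw [frobNorm_sq]
          exact sum_sq_div_le p hp0 (fun j => by positivity) hc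
  refine (probOf_le_of_sampleMean_deviation p hp0 hp1 hs f (pow_pos ht 2) fun ω hω => ?_).trans
    (by gcongr)
  rw [Fintype.sum_prod_type]
  refine (pow_le_pow_left₀ ht.le hω 2).trans_eq ?_
  simp_rw [frobNorm_sq, Matrix.sub_apply, gram_samplingMatrix_mul_apply p B hp0, ← hmean]
  rfl

end SamplingMatrix

section SingularValueDecomposition

variable {n d r : ℕ} (U : Matrix (Fin n) (Fin r) ℝ) (V : Matrix (Fin d) (Fin r) ℝ)

lemma mul_diagonal_mul_transpose_sub_truncDiag (σ : Fin r → ℝ) (k : ℕ) :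
    U * diagonal σ * Vᵀ - U * truncDiag σ k * Vᵀ
      = U * diagonal (fun l : Fin r => if (l : ℕ) < k then 0 else σ l) * Vᵀ := by
  rw [truncDiag, ← Matrix.sub_mul, ← Matrix.mul_sub, diagonal_sub]
  congr
  funext l
  split_ifs <;> ring

lemma mul_diagonal_mul_transpose_ne_zero (hU : Uᵀ * U = 1) (hV : Vᵀ * V = 1) {τ : Fin r → ℝ}
    (hτ : τ ≠ 0) : U * diagonal τ * Vᵀ ≠ 0 := by
  intro h
  have hdiag : Uᵀ * (U * diagonal τ * Vᵀ) * V = diagonal τ := by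
    rw [Matrix.mul_assoc, Matrix.mul_assoc, Matrix.mul_assoc, hV, Matrix.mul_one,
      ← Matrix.mul_assoc, hU, Matrix.one_mul]
  rw [h, Matrix.mul_zero, Matrix.zero_mul, eq_comm, diagonal_eq_zero] at hdiag
  exact hτ hdiag

lemma sum_sq_firstCols (hU : Uᵀ * U = 1) {k : ℕ} (hk : k ≤ r) :
    ∑ i, ∑ j, firstCols U k hk i j ^ 2 = k := by
  have hcol : ∀ c : Fin k, ∑ i, firstCols U k hk i c ^ 2 = 1 := fun c => by
    simpa [Matrix.mul_apply, sq, firstCols] using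
      congr_fun (congr_fun hU (Fin.castLE hk c)) (Fin.castLE hk c)
  simp [sum_comm (f := fun i j => firstCols U k hk i j ^ 2), hcol]

end SingularValueDecomposition

lemma mixed_probabilities {n : ℕ} {x y p : Fin n → ℝ} {X Y : ℝ}
    (hx : ∀ i, 0 ≤ x i) (hy : ∀ i, 0 ≤ y i) (hX : ∑ i, x i = X) (hY : ∑ i, y i = Y)
    (hX0 : 0 < X) (hY0 : 0 < Y) (hp : ∀ i, p i = 1 / 2 * (x i / X) + 1 / 2 * (y i / Y)) :
    (∀ i, 0 ≤ p i) ∧ ∑ i, p i = 1 ∧ ∀ i, y i ≤ 2 * Y * p i := by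
  refine ⟨fun i => ?_, ?_, fun i => ?_⟩
  · rw [hp i]
    have := hx i; have := hy i
    positivity
  · simp_rw [hp, sum_add_distrib, ← mul_sum, ← sum_div, hX, hY, div_self hX0.ne',
      div_self hY0.ne']
    norm_num
  · have hmix : 2 * Y * p i = Y * (x i / X) + y i := by
      rw [hp i]
      field_simp
    have := mul_nonneg hY0.le (div_nonneg (hx i) hX0.le)
    linarith

theorem stmt_12_general {n d r : ℕ} {k : ℕ} (s : ℕ) (hs : 0 < s)
    (A : Matrix (Fin n) (Fin d) ℝ)
    (U : Matrix (Fin n) (Fin r) ℝ) (V : Matrix (Fin d) (Fin r) ℝ) (σ : Fin r → ℝ)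
    (hU : Uᵀ * U = 1) (hV : Vᵀ * V = 1)
    (hσpos : ∀ i, 0 < σ i)
    (hA : A = U * Matrix.diagonal σ * Vᵀ)
    (hk1 : 1 ≤ k) (hkr : k < r)
    (p : Fin n → ℝ)
    (hpdef : ∀ i, p i =
        1 / 2 * ((∑ j, (firstCols U k hkr.le i j) ^ 2) / k)
      + 1 / 2 * ((∑ j, ((A - U * truncDiag σ k * Vᵀ) i j) ^ 2)
          / frobNorm (A - U * truncDiag σ k * Vᵀ) ^ 2))
    (ε δ : ℝ) (hε0 : 0 < ε) (hδ0 : 0 < δ)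
    (hsbig : (s : ℝ) ≥ 8 * k / (δ * ε ^ 2)) :
    probOf p (fun (ω : Fin s → Fin n) =>
        ε / Real.sqrt k * frobNorm (A - U * truncDiag σ k * Vᵀ) ^ 2
          ≤ |frobNorm (samplingMatrix p s ω * (A - U * truncDiag σ k * Vᵀ)) ^ 2
              - frobNorm (A - U * truncDiag σ k * Vᵀ) ^ 2|)
      ≤ δ / 4
    ∧ probOf p (fun (ω : Fin s → Fin n) =>
        ε / Real.sqrt k * frobNorm (A - U * truncDiag σ k * Vᵀ) ^ 2
          ≤ frobNorm ((A - U * truncDiag σ k * Vᵀ)ᵀ * (samplingMatrix p s ω)ᵀ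
              * samplingMatrix p s ω * (A - U * truncDiag σ k * Vᵀ)
              - (A - U * truncDiag σ k * Vᵀ)ᵀ * (A - U * truncDiag σ k * Vᵀ)))
      ≤ δ / 4 := by
  set B := A - U * truncDiag σ k * Vᵀ with hB
  set F := frobNorm B ^ 2
  have hkR : (0 : ℝ) < k := by exact_mod_cast hk1
  have hF : 0 < F := by
    refine frobNorm_sq_pos ?_
    rw [hB, hA, mul_diagonal_mul_transpose_sub_truncDiag]
    refine mul_diagonal_mul_transpose_ne_zero U V hU hV fun hτ => (hσpos ⟨k, hkr⟩).ne' ?_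
    simpa using congr_fun hτ ⟨k, hkr⟩
  obtain ⟨hp0, hp1, hc⟩ := mixed_probabilities (fun i => by positivity) (fun i => by positivity)
    (sum_sq_firstCols U hU hkr.le) (frobNorm_sq B).symm hkR hF hpdef
  have ht : 0 < ε / √k * F := by positivity
  have hbound : 2 * F * F / (s * (ε / √k * F) ^ 2) ≤ δ / 4 := by
    rw [ge_iff_le, div_le_iff₀ (by positivity)] at hsbig
    rw [mul_pow, div_pow, Real.sq_sqrt hkR.le, div_le_div_iff₀ (by positivity) (by norm_num)]
    field_simp
    nlinarith
  exact ⟨(probOf_le_abs_frobNorm_sq_samplingMatrix_mul_sub p B hp0 hp1 hs hc ht).trans hbound,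
    (probOf_le_frobNorm_gram_samplingMatrix_mul_sub p B hp0 hp1 hs hc ht).trans hbound⟩

/-- leverage-score sampling, residual-term probability bounds. -/
theorem stmt_12 {n d r : ℕ} {k : ℕ} (s : ℕ) (hs : 0 < s)
    (A : Matrix (Fin n) (Fin d) ℝ)
    (U : Matrix (Fin n) (Fin r) ℝ) (V : Matrix (Fin d) (Fin r) ℝ) (σ : Fin r → ℝ)
    (hU : Uᵀ * U = 1) (hV : Vᵀ * V = 1)
    (hσdec : ∀ i j : Fin r, i ≤ j → σ j ≤ σ i) (hσpos : ∀ i, 0 < σ i)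
    (hA : A = U * Matrix.diagonal σ * Vᵀ) (hrank : A.rank = r)
    (hk1 : 1 ≤ k) (hkr : k < r)
    (p : Fin n → ℝ)
    (hpdef : ∀ i, p i =
        1 / 2 * ((∑ j, (firstCols U k hkr.le i j) ^ 2) / k)
      + 1 / 2 * ((∑ j, ((A - U * truncDiag σ k * Vᵀ) i j) ^ 2)
          / frobNorm (A - U * truncDiag σ k * Vᵀ) ^ 2))
    (ε δ : ℝ) (hε0 : 0 < ε) (hδ0 : 0 < δ) (hδ1 : δ < 1)
    (hsbig : (s : ℝ) ≥ 8 * k / (δ * ε ^ 2)) :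
    probOf p (fun (ω : Fin s → Fin n) =>
        ε / Real.sqrt k * frobNorm (A - U * truncDiag σ k * Vᵀ) ^ 2
          ≤ |frobNorm (samplingMatrix p s ω * (A - U * truncDiag σ k * Vᵀ)) ^ 2
              - frobNorm (A - U * truncDiag σ k * Vᵀ) ^ 2|)
      ≤ δ / 4
    ∧ probOf p (fun (ω : Fin s → Fin n) =>
        ε / Real.sqrt k * frobNorm (A - U * truncDiag σ k * Vᵀ) ^ 2
          ≤ frobNorm ((A - U * truncDiag σ k * Vᵀ)ᵀ * (samplingMatrix p s ω)ᵀ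
              * samplingMatrix p s ω * (A - U * truncDiag σ k * Vᵀ)
              - (A - U * truncDiag σ k * Vᵀ)ᵀ * (A - U * truncDiag σ k * Vᵀ)))
      ≤ δ / 4 :=
  stmt_12_general s hs A U V σ hU hV hσpos hA hk1 hkr p hpdef ε δ hε0 hδ0 hsbig
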